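/- Let G be a graph on vertex set [n] and z ∈ ℕ. Then the encoding map π_z(G) described below is a permutation of [2zn + |E(G)|] (i.e., it is a bijection). -/

import Mathlib

open scoped Classical

noncomputable section

/-- Number of right-neighbours of `v` (neighbours `u` with `v < u ≤ n`). -/
def degPlus (n : ℕ) (E : ℕ → ℕ → Prop) (v : ℕ) : ℕ :=
  ((Finset.Icc (v + 1) n).filter (fun u => E v u)).card

/-- Number of left-neighbours of `v` (neighbours `u` with `1 ≤ u < v`). -/
def degMinus (n : ℕ) (E : ℕ → ℕ → Prop) (v : ℕ) : ℕ :=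
  ((Finset.Icc 1 (v - 1)).filter (fun u => E v u)).card

/-- The number of edges of the graph with vertex set `[1, n]` and adjacency `E`. -/
def edgeCount (n : ℕ) (E : ℕ → ℕ → Prop) : ℕ :=
  (((Finset.Icc 1 n) ×ˢ (Finset.Icc 1 n)).filter (fun p => p.1 < p.2 ∧ E p.1 p.2)).card

/-- Starting position of the left separating run of `v`. -/
def pL (n z : ℕ) (E : ℕ → ℕ → Prop) (v : ℕ) : ℕ :=
  1 + ∑ w ∈ Finset.Ico 1 v, (2 * z + degPlus n E w)

/-- Starting position of the encoding entries of `v`. -/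
def pM (n z : ℕ) (E : ℕ → ℕ → Prop) (v : ℕ) : ℕ := pL n z E v + z

/-- Starting position of the right separating run of `v`. -/
def pR (n z : ℕ) (E : ℕ → ℕ → Prop) (v : ℕ) : ℕ := pM n z E v + degPlus n E v

/-- Starting (largest) value of the right separating run of `v`. -/
def qR (n z : ℕ) (E : ℕ → ℕ → Prop) (v : ℕ) : ℕ :=
  z + ∑ w ∈ Finset.Ico 1 v, (2 * z + degMinus n E w)

/-- Least value reserved for the encoding entries pointing to `v`. -/
def qM (n z : ℕ) (E : ℕ → ℕ → Prop) (v : ℕ) : ℕ := qR n z E v + 1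

/-- Starting (largest) value of the left separating run of `v`. -/
def qL (n z : ℕ) (E : ℕ → ℕ → Prop) (v : ℕ) : ℕ := qR n z E v + z + degMinus n E v

/-- `ℓ(v, u) = |{w < v : {w, u} ∈ E}|`. -/
def ellE (E : ℕ → ℕ → Prop) (v u : ℕ) : ℕ :=
  ((Finset.Ico 1 v).filter (fun w => E w u)).card

/-- The sorted list of right-neighbours of `v`. -/
def nbrList (n : ℕ) (E : ℕ → ℕ → Prop) (v : ℕ) : List ℕ :=
  Finset.sort ((Finset.Icc (v + 1) n).filter (fun u => E v u)) (· ≤ ·)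

/-- The encoding permutation `π_z(G)` of the paper, as a function on positions
(acting on `[1, 2zn + |E(G)|]`): for each vertex `v` (in order) it consists of a
decreasing run of length `z` starting with value `qL v`, then one encoding entry
`qM u + ℓ(v, u)` for each right-neighbour `u` of `v` in increasing order, then a
decreasing run of length `z` starting with value `qR v`. -/
def enc (n z : ℕ) (E : ℕ → ℕ → Prop) (i : ℕ) : ℕ :=
  if h1 : ∃ v, v ∈ Finset.Icc 1 n ∧ pL n z E v ≤ i ∧ i < pM n z E v then
    qL n z E h1.choose - (i - pL n z E h1.choose)
  else if h2 : ∃ v, v ∈ Finset.Icc 1 n ∧ pR n z E v ≤ i ∧ i < pR n z E v + z then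
    qR n z E h2.choose - (i - pR n z E h2.choose)
  else if h3 : ∃ v, v ∈ Finset.Icc 1 n ∧ pM n z E v ≤ i ∧ i < pR n z E v then
    (fun v => (fun u => qM n z E u + ellE E v u)
      ((nbrList n E v).getD (i - pM n z E v) 0)) h3.choose
  else 0

/-- `i` lies in the left or right separating run of the vertex `v`. -/
def inRunOf (n z : ℕ) (E : ℕ → ℕ → Prop) (v i : ℕ) : Prop :=
  (pL n z E v ≤ i ∧ i < pL n z E v + z) ∨ (pR n z E v ≤ i ∧ i < pR n z E v + z)

/-- `i` lies in some separating run. -/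
def inSepRun (n z : ℕ) (E : ℕ → ℕ → Prop) (i : ℕ) : Prop :=
  ∃ v, v ∈ Finset.Icc 1 n ∧ inRunOf n z E v i

/-- `σ`, a bijection of `[1, l]`, is a pattern of `π`, a bijection of `[1, m]`:
there is a strictly increasing `φ : [1, l] → [1, m]` with
`σ x < σ y ↔ π (φ x) < π (φ y)`. -/
def IsPatternOn (σ : ℕ → ℕ) (l : ℕ) (π : ℕ → ℕ) (m : ℕ) : Prop :=
  ∃ φ : ℕ → ℕ, Set.MapsTo φ (Set.Icc 1 l) (Set.Icc 1 m) ∧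
    StrictMonoOn φ (Set.Icc 1 l) ∧
    ∀ x ∈ Set.Icc 1 l, ∀ y ∈ Set.Icc 1 l, (σ x < σ y ↔ π (φ x) < π (φ y))

end


/-!
Positions split into consecutive blocks `[pL v, pL (v + 1))`, one per vertex `v`, each made of
the left run, the `deg⁺ v` encoding entries and the right run of `v`. Values split likewise into
blocks `(qR v - z, qR (v + 1) - z]` of length `2z + deg⁻ v`: the right run of `v` fills the bottom
`z` values, the left run the top `z`, and in between lie the `deg⁻ v` values `qM v + ℓ(w, v)` of
the entries pointing to `v` from its left neighbours `w`. These are distinct because `ℓ(·, v)`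
strictly increases past each neighbour of `v`. Since `∑ deg⁺ = ∑ deg⁻ = |E(G)|`, both block
systems have total length `2zn + |E(G)|`, so `π` maps `[1, 2zn + |E(G)|]` injectively into itself.
-/

open Finset

theorem Monotone.eq_of_lt_apply_succ {f : ℕ → ℕ} (hf : Monotone f) {v w : ℕ}
    (hvw : f v < f (w + 1)) (hwv : f w < f (v + 1)) : v = w := by
  by_contra hne
  rcases Nat.lt_or_gt_of_ne hne with h | h
  · exact (hf h).not_gt hwv
  · exact (hf h).not_gt hvw

theorem Monotone.exists_mem_Ico_le_lt_apply_succ {f : ℕ → ℕ} (hf : Monotone f) {a b i : ℕ}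
    (ha : f a ≤ i) (hb : i < f b) : ∃ v ∈ Ico a b, f v ≤ i ∧ i < f (v + 1) := by
  induction b with
  | zero => exact absurd (hf (Nat.zero_le a)) (by omega)
  | succ b ih =>
    by_cases hib : i < f b
    · obtain ⟨v, hv, hfv⟩ := ih hib
      exact ⟨v, Ico_subset_Ico_right b.le_succ hv, hfv⟩
    · have hab : a ≤ b := by
        by_contra! hba
        exact absurd (hf (show b + 1 ≤ a from hba)) (by omega)
      exact ⟨b, mem_Ico.2 ⟨hab, b.lt_succ_self⟩, not_lt.1 hib, hb⟩

section Encoding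

variable {n z : ℕ} {E : ℕ → ℕ → Prop}

lemma pL_succ {v : ℕ} (hv : 1 ≤ v) : pL n z E (v + 1) = pR n z E v + z := by
  simp only [pL, pR, pM]
  rw [sum_Ico_succ_top hv]
  ring

lemma qR_succ {v : ℕ} (hv : 1 ≤ v) : qR n z E (v + 1) = qL n z E v + z := by
  simp only [qR, qL]
  rw [sum_Ico_succ_top hv]
  ring

lemma pL_mono : Monotone (pL n z E) := fun _ _ h =>
  Nat.add_le_add_left (sum_le_sum_of_subset (Ico_subset_Ico_right h)) 1

lemma qR_mono : Monotone (qR n z E) := fun _ _ h =>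
  Nat.add_le_add_left (sum_le_sum_of_subset (Ico_subset_Ico_right h)) z

lemma edgeCount_eq_sum_degPlus : edgeCount n E = ∑ v ∈ Icc 1 n, degPlus n E v := by
  rw [edgeCount, card_filter, sum_product]
  refine sum_congr rfl fun v hv => ?_
  rw [degPlus, ← card_filter]
  congr 1
  ext u
  simp only [mem_filter, mem_Icc] at hv ⊢
  constructor
  · rintro ⟨⟨-, hun⟩, hvu, hE⟩
    exact ⟨⟨hvu, hun⟩, hE⟩
  · rintro ⟨⟨hvu, hun⟩, hE⟩
    exact ⟨⟨by omega, hun⟩, hvu, hE⟩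

lemma edgeCount_eq_sum_degMinus (hsym : ∀ u v, E u v → E v u) :
    edgeCount n E = ∑ u ∈ Icc 1 n, degMinus n E u := by
  rw [edgeCount, card_filter, sum_product_right]
  refine sum_congr rfl fun u hu => ?_
  rw [degMinus, ← card_filter]
  congr 1
  ext w
  simp only [mem_filter, mem_Icc] at hu ⊢
  constructor
  · rintro ⟨⟨hw, -⟩, hwu, hE⟩
    exact ⟨⟨hw, by omega⟩, hsym _ _ hE⟩
  · rintro ⟨⟨hw, hwu⟩, hE⟩
    exact ⟨⟨hw, by omega⟩, by omega, hsym _ _ hE⟩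

lemma pL_top : pL n z E (n + 1) = 2 * z * n + edgeCount n E + 1 := by
  rw [pL, Ico_add_one_right_eq_Icc, sum_add_distrib, ← edgeCount_eq_sum_degPlus, sum_const,
    Nat.card_Icc, Nat.add_sub_cancel, smul_eq_mul]
  ring

lemma qR_top (hsym : ∀ u v, E u v → E v u) :
    qR n z E (n + 1) = 2 * z * n + edgeCount n E + z := by
  rw [qR, Ico_add_one_right_eq_Icc, sum_add_distrib, ← edgeCount_eq_sum_degMinus hsym,
    sum_const, Nat.card_Icc, Nat.add_sub_cancel, smul_eq_mul]
  ring

lemma degMinus_eq_ellE (hsym : ∀ u v, E u v → E v u) (u : ℕ) :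
    degMinus n E u = ellE E u u := by
  rw [degMinus, ellE]
  congr 1
  ext w
  simp only [mem_filter, mem_Icc, mem_Ico]
  exact ⟨fun ⟨hw, hE⟩ => ⟨by omega, hsym _ _ hE⟩, fun ⟨hw, hE⟩ => ⟨by omega, hsym _ _ hE⟩⟩

lemma ellE_lt_ellE {u v w : ℕ} (hw : 1 ≤ w) (hwv : w < v) (hE : E w u) :
    ellE E w u < ellE E v u := by
  refine card_lt_card ((ssubset_iff_of_subset
    (filter_subset_filter _ (Ico_subset_Ico_right hwv.le))).2 ⟨w, ?_, ?_⟩)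
  · exact mem_filter.2 ⟨mem_Ico.2 ⟨hw, hwv⟩, hE⟩
  · simp [mem_filter, mem_Ico]

lemma ellE_injOn (u : ℕ) : Set.InjOn (fun w => ellE E w u) {w | 1 ≤ w ∧ E w u} := by
  intro w hw w' hw' h
  rcases lt_trichotomy w w' with hlt | rfl | hlt
  · exact absurd h (ellE_lt_ellE hw.1 hlt hw.2).ne
  · rfl
  · exact absurd h (ellE_lt_ellE hw'.1 hlt hw'.2).ne'

lemma ellE_lt_degMinus (hsym : ∀ u v, E u v → E v u) {u w : ℕ} (hw : 1 ≤ w) (hwu : w < u)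
    (hE : E w u) : ellE E w u < degMinus n E u :=
  degMinus_eq_ellE hsym u ▸ ellE_lt_ellE hw hwu hE

lemma length_nbrList (v : ℕ) : (nbrList n E v).length = degPlus n E v :=
  length_sort _

lemma getD_nbrList_mem {v j : ℕ} (hj : j < degPlus n E v) :
    (nbrList n E v).getD j 0 ∈ (Icc (v + 1) n).filter (E v) := by
  rw [List.getD_eq_getElem _ _ (by rwa [length_nbrList]), ← mem_sort (· ≤ ·)]
  exact List.getElem_mem _

lemma getD_nbrList_inj {v j j' : ℕ} (hj : j < degPlus n E v) (hj' : j' < degPlus n E v)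
    (h : (nbrList n E v).getD j 0 = (nbrList n E v).getD j' 0) : j = j' := by
  rw [← length_nbrList] at hj hj'
  rw [List.getD_eq_getElem _ _ hj, List.getD_eq_getElem _ _ hj'] at h
  exact (sort_nodup _ _).getElem_inj_iff.1 h

lemma eq_of_mem_block {v w i : ℕ} (hv : 1 ≤ v) (hw : 1 ≤ w)
    (hvi : pL n z E v ≤ i) (hiv : i < pR n z E v + z)
    (hwi : pL n z E w ≤ i) (hiw : i < pR n z E w + z) : v = w :=
  (pL_mono (n := n) (z := z) (E := E)).eq_of_lt_apply_succ
    (by rw [pL_succ hw]; omega) (by rw [pL_succ hv]; omega)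

/-- The vertex picked by `Exists.choose` in `enc` is the one whose block contains `i`. -/
lemma choose_eq_of_mem_block {v i : ℕ} (hv : v ∈ Icc 1 n)
    (hvi : pL n z E v ≤ i) (hiv : i < pR n z E v + z) {a b : ℕ → ℕ}
    (ha : ∀ w, pL n z E w ≤ a w) (hb : ∀ w, b w ≤ pR n z E w + z)
    (h : ∃ w, w ∈ Icc 1 n ∧ a w ≤ i ∧ i < b w) : h.choose = v ∧ a v ≤ i ∧ i < b v := by
  obtain ⟨hw, hwi, hiw⟩ := h.choose_spec
  obtain rfl : h.choose = v := eq_of_mem_block (mem_Icc.1 hw).1 (mem_Icc.1 hv).1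
    ((ha _).trans hwi) (hiw.trans_le (hb _)) hvi hiv
  exact ⟨rfl, hwi, hiw⟩

lemma enc_pL_add {v j : ℕ} (hv : v ∈ Icc 1 n) (hj : j < z) :
    enc n z E (pL n z E v + j) = qL n z E v - j := by
  have hpos : ∀ w, pM n z E w ≤ pR n z E w + z := fun w => by unfold pR; omega
  have hL : ∃ w, w ∈ Icc 1 n ∧ pL n z E w ≤ pL n z E v + j ∧ pL n z E v + j < pM n z E w :=
    ⟨v, hv, by omega, by unfold pM; omega⟩
  rw [enc, dif_pos hL,
    (choose_eq_of_mem_block hv (by omega) (by unfold pR pM; omega) (fun _ => le_rfl) hpos hL).1]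
  omega

lemma enc_pR_add {v j : ℕ} (hv : v ∈ Icc 1 n) (hj : j < z) :
    enc n z E (pR n z E v + j) = qR n z E v - j := by
  have hvi : pL n z E v ≤ pR n z E v + j := by unfold pR pM; omega
  have hiv : pR n z E v + j < pR n z E v + z := by omega
  have hpL : ∀ w, pL n z E w ≤ pR n z E w := fun w => by unfold pR pM; omega
  have hL : ¬ ∃ w, w ∈ Icc 1 n ∧ pL n z E w ≤ pR n z E v + j ∧ pR n z E v + j < pM n z E w :=
    fun h => by
      have := (choose_eq_of_mem_block hv hvi hiv (fun _ => le_rfl)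
        (fun w => by unfold pR; omega) h).2
      unfold pR at this; omega
  have hR : ∃ w, w ∈ Icc 1 n ∧ pR n z E w ≤ pR n z E v + j ∧ pR n z E v + j < pR n z E w + z :=
    ⟨v, hv, by omega, hiv⟩
  rw [enc, dif_neg hL, dif_pos hR,
    (choose_eq_of_mem_block hv hvi hiv hpL (fun _ => le_rfl) hR).1]
  omega

lemma enc_pM_add {v j : ℕ} (hv : v ∈ Icc 1 n) (hj : j < degPlus n E v) :
    enc n z E (pM n z E v + j) =
      qM n z E ((nbrList n E v).getD j 0) + ellE E v ((nbrList n E v).getD j 0) := by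
  have hvi : pL n z E v ≤ pM n z E v + j := by unfold pM; omega
  have hiv : pM n z E v + j < pR n z E v + z := by unfold pR; omega
  have hpL : ∀ w, pL n z E w ≤ pM n z E w := fun w => by unfold pM; omega
  have hL : ¬ ∃ w, w ∈ Icc 1 n ∧ pL n z E w ≤ pM n z E v + j ∧ pM n z E v + j < pM n z E w :=
    fun h => by
      have := (choose_eq_of_mem_block hv hvi hiv (fun _ => le_rfl)
        (fun w => by unfold pR; omega) h).2
      omega
  have hR : ¬ ∃ w, w ∈ Icc 1 n ∧ pR n z E w ≤ pM n z E v + j ∧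
      pM n z E v + j < pR n z E w + z :=
    fun h => by
      have := (choose_eq_of_mem_block hv hvi hiv (fun w => by unfold pR pM; omega)
        (fun _ => le_rfl) h).2
      unfold pR at this; omega
  have hM : ∃ w, w ∈ Icc 1 n ∧ pM n z E w ≤ pM n z E v + j ∧ pM n z E v + j < pR n z E w :=
    ⟨v, hv, by omega, by unfold pR; omega⟩
  rw [enc, dif_neg hL, dif_neg hR, dif_pos hM,
    (choose_eq_of_mem_block hv hvi hiv hpL (fun w => by omega) hM).1]
  simp only [Nat.add_sub_cancel_left]

lemma enc_cases (hsym : ∀ u v, E u v → E v u) {i : ℕ} (hi : 1 ≤ i)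
    (hiN : i ≤ 2 * z * n + edgeCount n E) :
    ∃ v ∈ Icc 1 n, qR n z E v < enc n z E i + z ∧ enc n z E i + z ≤ qR n z E (v + 1) ∧
      ((∃ j < z, i = pL n z E v + j ∧ enc n z E i + j = qL n z E v ∧
          qR n z E v + degMinus n E v < enc n z E i) ∨
        (∃ j < z, i = pR n z E v + j ∧ enc n z E i + j = qR n z E v) ∨
        (∃ w j, 1 ≤ w ∧ j < degPlus n E w ∧ i = pM n z E w + j ∧
          (nbrList n E w).getD j 0 = v ∧ E w v ∧ ellE E w v < degMinus n E v ∧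
          enc n z E i = qR n z E v + 1 + ellE E w v)) := by
  obtain ⟨v, hv, hvi, hiv⟩ := (pL_mono (n := n) (z := z) (E := E)).exists_mem_Ico_le_lt_apply_succ
    (a := 1) (b := n + 1) (by simpa [pL] using hi) (by rw [pL_top]; omega)
  rw [Ico_add_one_right_eq_Icc] at hv
  rw [pL_succ (mem_Icc.1 hv).1] at hiv
  have hqL : qL n z E v = qR n z E v + z + degMinus n E v := rfl
  have hqv : qR n z E (v + 1) = qL n z E v + z := qR_succ (mem_Icc.1 hv).1
  have hzq : z ≤ qR n z E v := Nat.le_add_right _ _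
  rcases lt_or_ge i (pM n z E v) with hiM | hiM
  · obtain ⟨j, rfl⟩ := Nat.exists_eq_add_of_le hvi
    have hj : j < z := by unfold pM at hiM; omega
    rw [enc_pL_add hv hj]
    exact ⟨v, hv, by omega, by omega, Or.inl ⟨j, hj, rfl, by omega, by omega⟩⟩
  rcases lt_or_ge i (pR n z E v) with hiR | hiR
  · obtain ⟨j, rfl⟩ := Nat.exists_eq_add_of_le hiM
    have hj : j < degPlus n E v := by unfold pR at hiR; omega
    rw [enc_pM_add hv hj]
    obtain ⟨hu, hE⟩ := mem_filter.1 (getD_nbrList_mem hj)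
    set u := (nbrList n E v).getD j 0
    have hu' : v < u ∧ u ≤ n := by rw [mem_Icc] at hu; omega
    have hell := ellE_lt_degMinus (n := n) hsym (mem_Icc.1 hv).1 hu'.1 hE
    have hqu : qR n z E (u + 1) = qR n z E u + z + degMinus n E u + z := qR_succ (by omega)
    have hqM : qM n z E u = qR n z E u + 1 := rfl
    exact ⟨u, mem_Icc.2 ⟨by omega, hu'.2⟩, by omega, by omega,
      Or.inr (Or.inr ⟨v, j, (mem_Icc.1 hv).1, hj, rfl, rfl, hE, hell, rfl⟩)⟩
  · obtain ⟨j, rfl⟩ := Nat.exists_eq_add_of_le hiR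
    have hj : j < z := by omega
    rw [enc_pR_add hv hj]
    exact ⟨v, hv, by omega, by omega, Or.inr (Or.inl ⟨j, hj, rfl, by omega⟩)⟩

lemma enc_mapsTo (hsym : ∀ u v, E u v → E v u) :
    Set.MapsTo (enc n z E) (Set.Icc 1 (2 * z * n + edgeCount n E))
      (Set.Icc 1 (2 * z * n + edgeCount n E)) := by
  intro i hi
  obtain ⟨v, hv, hlo, hhi, -⟩ := enc_cases hsym hi.1 hi.2
  have hq : qR n z E (v + 1) ≤ qR n z E (n + 1) := qR_mono (by simp at hv; omega)
  have hzq : z ≤ qR n z E v := Nat.le_add_right _ _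
  rw [qR_top hsym] at hq
  exact ⟨by omega, by omega⟩

lemma enc_injOn (hsym : ∀ u v, E u v → E v u) :
    Set.InjOn (enc n z E) (Set.Icc 1 (2 * z * n + edgeCount n E)) := by
  intro i hi i' hi' heq
  obtain ⟨v, -, hlo, hhi, hcase⟩ := enc_cases hsym hi.1 hi.2
  obtain ⟨v', -, hlo', hhi', hcase'⟩ := enc_cases hsym hi'.1 hi'.2
  obtain rfl : v = v' := (qR_mono (n := n) (z := z) (E := E)).eq_of_lt_apply_succ
    (by omega) (by omega)
  rcases hcase with ⟨j, -, rfl, hval, hlb⟩ | ⟨j, -, rfl, hval⟩ |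
      ⟨w, j, hw, hj, rfl, hget, hE, hell, hval⟩ <;>
    rcases hcase' with ⟨j', -, rfl, hval', hlb'⟩ | ⟨j', -, rfl, hval'⟩ |
      ⟨w', j', hw', hj', rfl, hget', hE', hell', hval'⟩ <;>
    try omega
  obtain rfl : w = w' := ellE_injOn v ⟨hw, hE⟩ ⟨hw', hE'⟩ (by simp only; omega)
  rw [getD_nbrList_inj hj hj' (hget.trans hget'.symm)]

end Encoding

theorem enc_bijOn_general (n z : ℕ) (E : ℕ → ℕ → Prop)
    (hsym : ∀ u v, E u v → E v u) :
    Set.BijOn (enc n z E) (Set.Icc 1 (2 * z * n + edgeCount n E))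
      (Set.Icc 1 (2 * z * n + edgeCount n E)) :=
  ((Set.finite_Icc _ _).injOn_iff_bijOn_of_mapsTo (enc_mapsTo hsym)).1 (enc_injOn hsym)

/-- For a graph  on vertex set  (given by a symmetric, irreflexive adjacency
relation supported on ) and any , the encoding map  is a
permutation of . -/
theorem enc_bijOn (n z : ℕ) (E : ℕ → ℕ → Prop)
    (hsym : ∀ u v, E u v → E v u)
    (hrange : ∀ u v, E u v → u ∈ Finset.Icc 1 n ∧ v ∈ Finset.Icc 1 n)
    (hirr : ∀ v, ¬ E v v) :
    Set.BijOn (enc n z E) (Set.Icc 1 (2 * z * n + edgeCount n E))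
      (Set.Icc 1 (2 * z * n + edgeCount n E)) :=
  enc_bijOn_general n z E hsym
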